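/- Let G be a finite bipartite graph and let P ⊆ ℝ^{E(G)} be defined by the inequalities x_e ≥ 0 for all e ∈ E(G) and ∑_{e incident to u} x_e ≤ 1 for all u ∈ V(G). The vertices (extreme points) of P are exactly the indicator vectors of matchings of G (including the empty matching). -/

import Mathlib

/-!
For a finite bipartite graph `G`, the polytope defined by `x_e ≥ 0` for all edges and
`∑_{e ∋ u} x_e ≤ 1` for all vertices has as its extreme points exactly the indicator
vectors of matchings of `G` (including the empty matching).
-/

open Finset

/-- The matching polytope of `G` in `ℝ^{E(G)}`: `x_e ≥ 0` for every edge,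
and `∑_{e ∋ u} x_e ≤ 1` for every vertex `u`. -/
def matchingPolytope {V : Type} [Fintype V] [DecidableEq V]
    (G : SimpleGraph V) [Fintype G.edgeSet] : Set (G.edgeSet → ℝ) :=
  {x | (∀ e : G.edgeSet, 0 ≤ x e) ∧
       (∀ u : V, ∑ e : G.edgeSet, (if u ∈ (e : Sym2 V) then x e else 0) ≤ 1)}

/-- `M` is a matching of `G`: a set of pairwise disjoint edges. -/
def IsMatchingSet {V : Type} (G : SimpleGraph V) (M : Set (Sym2 V)) : Prop :=
  M ⊆ G.edgeSet ∧ (∀ e ∈ M, ∀ f ∈ M, e ≠ f → ∀ v : V, v ∈ e → v ∉ f)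

/-- The indicator vector in `ℝ^{E(G)}` of a set `M` of edges. -/
noncomputable def edgeIndicator {V : Type} (G : SimpleGraph V) (M : Set (Sym2 V)) :
    G.edgeSet → ℝ :=
  Set.indicator {e : G.edgeSet | (e : Sym2 V) ∈ M} (fun _ => 1)

/-
Indicator vectors of matchings are 0/1 points of a polytope lying in the unit cube, hence
extreme. Conversely, let `x` be a point of the polytope with a fractional coordinate, `F` its
set of fractional edges and `T` the set of tight vertices meeting `F`. A tight vertex cannot meet
exactly one fractional edge, so every vertex of `T` meets at least two edges of `F`. Then the
`T × F` incidence matrix has rank `< |F|`: if some edge of `F` leaves `T`, double counting gives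
`|T| < |F|`; otherwise `|T| ≤ |F|`, and the signs `±1` of a 2-colouring form a nonzero vector in
its left kernel. A nonzero kernel vector, extended by zero, is a direction along which every
tight constraint stays tight, so `x` is the midpoint of two points of the polytope.
-/

open Filter Topology Matrix

theorem Matrix.exists_mulVec_eq_zero_iff_rank_lt {m n K : Type*} [Fintype n] [Field K]
    (A : Matrix m n K) : (∃ v ≠ 0, A *ᵥ v = 0) ↔ A.rank < Fintype.card n := by
  rw [Matrix.rank, ← Module.finrank_fintype_fun_eq_card K,
    ← A.mulVecLin.finrank_range_add_finrank_ker, lt_add_iff_pos_right, Module.finrank_pos_iff,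
    Submodule.nontrivial_iff_ne_bot, Submodule.ne_bot_iff]
  simp [and_comm]

section Polyhedron

variable {ι E : Type*} [Finite ι] [AddCommGroup E] [Module ℝ E]

theorem eventually_add_smul_mem_polyhedron (ℓ : ι → E →ₗ[ℝ] ℝ) (c : ι → ℝ) {x d : E}
    (hx : ∀ i, ℓ i x ≤ c i) (hd : ∀ i, ℓ i x = c i → ℓ i d = 0) :
    ∀ᶠ t in 𝓝 (0 : ℝ), ∀ i, ℓ i (x + t • d) ≤ c i := by
  refine eventually_all.2 fun i => ?_
  simp only [map_add, map_smul, smul_eq_mul]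
  rcases (hx i).eq_or_lt with h | h
  · exact .of_forall fun t => by simp [h, hd i h]
  · have : Tendsto (fun t : ℝ => ℓ i x + t * ℓ i d) (𝓝 0) (𝓝 (ℓ i x)) :=
      (by fun_prop : Continuous fun t : ℝ => ℓ i x + t * ℓ i d).tendsto' 0 _ (by simp)
    exact (this.eventually (eventually_lt_nhds h)).mono fun _ => le_of_lt

theorem notMem_extremePoints_polyhedron (ℓ : ι → E →ₗ[ℝ] ℝ) (c : ι → ℝ) {x d : E}
    (hd0 : d ≠ 0) (hd : ∀ i, ℓ i x = c i → ℓ i d = 0) :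
    x ∉ Set.extremePoints ℝ {y | ∀ i, ℓ i y ≤ c i} := by
  intro hext
  have hpos := eventually_add_smul_mem_polyhedron ℓ c hext.1 hd
  have hneg : ∀ᶠ t in 𝓝 (0 : ℝ), ∀ i, ℓ i (x + (-t) • d) ≤ c i := by
    have := tendsto_neg (0 : ℝ)
    rw [neg_zero] at this
    exact this.eventually hpos
  obtain ⟨t, ⟨hp, hm⟩, ht⟩ :=
    (((hpos.and hneg).filter_mono nhdsWithin_le_nhds).and
      (self_mem_nhdsWithin : {0}ᶜ ∈ 𝓝[≠] (0 : ℝ))).exists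
  have hx : x ∈ openSegment ℝ (x + t • d) (x + (-t) • d) :=
    ⟨1 / 2, 1 / 2, by norm_num, by norm_num, by norm_num, by module⟩
  exact smul_ne_zero ht hd0 (add_eq_left.1 (hext.2 hp hm hx))

end Polyhedron

theorem mem_extremePoints_of_subset_cube {ι : Type*} {S : Set (ι → ℝ)}
    (hS : S ⊆ Set.univ.pi fun _ => Set.Icc 0 1) {x : ι → ℝ} (hx : x ∈ S)
    (h01 : ∀ i, x i = 0 ∨ x i = 1) : x ∈ Set.extremePoints ℝ S :=
  inter_extremePoints_subset_extremePoints_of_subset hS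
    ⟨hx, by rw [extremePoints_pi]; simpa [Set.extremePoints_Icc zero_le_one] using h01⟩

theorem Sym2.card_filter_mem_le_two {V : Type*} [DecidableEq V] (T : Finset V) (e : Sym2 V) :
    #{u ∈ T | u ∈ e} ≤ 2 :=
  (card_le_card fun _ hu => Sym2.mem_toFinset.2 (mem_filter.1 hu).2).trans <| by
    rw [Sym2.card_toFinset]; split <;> omega

theorem Sym2.card_filter_mem_lt_two {V : Type*} [DecidableEq V] {T : Finset V} {e : Sym2 V}
    {u : V} (hue : u ∈ e) (huT : u ∉ T) : #{u ∈ T | u ∈ e} < 2 := by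
  refine (card_lt_card ⟨fun v hv => Sym2.mem_toFinset.2 (mem_filter.1 hv).2, fun h => ?_⟩).trans_le
    (by rw [Sym2.card_toFinset]; split <;> omega)
  exact huT (mem_filter.1 (h (Sym2.mem_toFinset.2 hue))).1

theorem edgeIndicator_eq_zero_or_eq_one {V : Type} (G : SimpleGraph V) (M : Set (Sym2 V))
    (e : G.edgeSet) : edgeIndicator G M e = 0 ∨ edgeIndicator G M e = 1 := by
  by_cases h : (e : Sym2 V) ∈ M <;> simp [edgeIndicator, h]

section Incidence

variable {V : Type} [DecidableEq V] {G : SimpleGraph V}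

theorem SimpleGraph.Coloring.sum_neg_one_pow_eq_zero (C : G.Coloring (Fin 2)) {e : Sym2 V}
    (he : e ∈ G.edgeSet) {T : Finset V} (heT : ∀ u ∈ e, u ∈ T) :
    ∑ u ∈ T, (if u ∈ e then (-1 : ℝ) ^ (C u : ℕ) else 0) = 0 := by
  induction e using Sym2.ind with
  | _ a b =>
    have hab : G.Adj a b := he
    have hfilter : {u ∈ T | u ∈ s(a, b)} = {a, b} := by
      ext u
      simp only [mem_filter, Sym2.mem_iff, mem_insert, mem_singleton]
      exact ⟨And.right, fun h => ⟨heT u (Sym2.mem_iff.2 h), h⟩⟩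
    rw [← sum_filter, hfilter, sum_pair hab.ne]
    have hC := C.valid hab
    generalize C a = i, C b = j at hC
    fin_cases i <;> fin_cases j <;> simp_all

theorem card_le_card_of_two_le_card_incident {F : Finset G.edgeSet} {T : Finset V}
    (hT : ∀ u ∈ T, 2 ≤ #{e ∈ F | u ∈ e.1}) : #T ≤ #F := by
  have := card_mul_le_card_mul (fun u (e : G.edgeSet) => u ∈ e.1) hT
    fun e _ => Sym2.card_filter_mem_le_two T e
  omega

theorem card_lt_card_of_two_le_card_incident {F : Finset G.edgeSet} {T : Finset V}
    (hT : ∀ u ∈ T, 2 ≤ #{e ∈ F | u ∈ e.1}) {e : G.edgeSet} (he : e ∈ F) {u : V}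
    (hue : u ∈ e.1) (huT : u ∉ T) : #T < #F := by
  have : #T * 2 < #F * 2 :=
    calc #T * 2 ≤ ∑ u ∈ T, #{e ∈ F | u ∈ e.1} := by
          simpa [mul_comm] using card_nsmul_le_sum T _ 2 hT
      _ = ∑ e ∈ F, #{u ∈ T | u ∈ e.1} :=
          sum_card_bipartiteAbove_eq_sum_card_bipartiteBelow _
      _ < ∑ _e ∈ F, 2 := sum_lt_sum (fun e _ => Sym2.card_filter_mem_le_two T e)
          ⟨e, he, Sym2.card_filter_mem_lt_two hue huT⟩
      _ = #F * 2 := by simp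
  omega

def incidenceSubmatrix (T : Finset V) (F : Finset G.edgeSet) : Matrix T F ℝ :=
  Matrix.of fun u e => if (u : V) ∈ (e : G.edgeSet).1 then 1 else 0

theorem rank_incidenceSubmatrix_lt (hG : G.Colorable 2) {F : Finset G.edgeSet}
    (hF : F.Nonempty) {T : Finset V} (hT : ∀ u ∈ T, 2 ≤ #{e ∈ F | u ∈ e.1}) :
    (incidenceSubmatrix T F).rank < #F := by
  by_cases hend : ∀ e ∈ F, ∀ u ∈ e.1, u ∈ T
  · obtain ⟨C⟩ := hG
    let s : T → ℝ := fun u => (-1) ^ (C u : ℕ)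
    have hs : s ≠ 0 := by
      obtain ⟨e, he⟩ := hF
      intro h
      simpa [s] using congrFun h ⟨_, hend e he _ e.1.out_fst_mem⟩
    have hsA : s ᵥ* incidenceSubmatrix T F = 0 := by
      funext e
      simp only [vecMul, dotProduct, incidenceSubmatrix, of_apply, mul_ite, mul_one, mul_zero,
        Pi.zero_apply]
      exact (sum_coe_sort T fun u => if u ∈ e.1.1 then (-1 : ℝ) ^ (C u : ℕ) else 0).trans
        (C.sum_neg_one_pow_eq_zero e.1.2 (hend e e.2))
    calc _ < Fintype.card T := by
          rw [← rank_transpose, ← exists_mulVec_eq_zero_iff_rank_lt]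
          exact ⟨s, hs, by rw [mulVec_transpose, hsA]⟩
      _ ≤ #F := (Fintype.card_coe T).trans_le (card_le_card_of_two_le_card_incident hT)
  · push Not at hend
    obtain ⟨e, he, u, hue, huT⟩ := hend
    exact (rank_le_card_height _).trans_lt <| (Fintype.card_coe T).trans_lt <|
      card_lt_card_of_two_le_card_incident hT he hue huT

end Incidence

section MatchingPolytope

variable {V : Type} [DecidableEq V] (G : SimpleGraph V) [Fintype G.edgeSet]

def incidentSum (u : V) : (G.edgeSet → ℝ) →ₗ[ℝ] ℝ where
  toFun x := ∑ e : G.edgeSet, if u ∈ (e : Sym2 V) then x e else 0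
  map_add' x y := by simp only [Pi.add_apply, ← sum_add_distrib, ite_add_ite, add_zero]
  map_smul' c x := by simp [mul_sum]

theorem matchingPolytope_eq_polyhedron [Fintype V] :
    matchingPolytope G = {x | ∀ i, Sum.elim (fun e => -LinearMap.proj e) (incidentSum G) i x ≤
      Sum.elim (fun _ => 0) (fun _ => 1) i} := by
  ext x
  simp [matchingPolytope, incidentSum, Sum.forall]

variable {G}

theorem sum_le_incidentSum {x : G.edgeSet → ℝ} (hx : ∀ e, 0 ≤ x e) {u : V}
    {s : Finset G.edgeSet} (hs : ∀ e ∈ s, u ∈ (e : Sym2 V)) :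
    ∑ e ∈ s, x e ≤ incidentSum G u x := by
  calc ∑ e ∈ s, x e = ∑ e ∈ s, if u ∈ (e : Sym2 V) then x e else 0 :=
        sum_congr rfl fun e he => (if_pos (hs e he)).symm
    _ ≤ incidentSum G u x :=
        sum_le_univ_sum_of_nonneg fun e => by split <;> simp [hx e]

theorem add_le_incidentSum {x : G.edgeSet → ℝ} (hx : ∀ e, 0 ≤ x e) {u : V} {e f : G.edgeSet}
    (hue : u ∈ (e : Sym2 V)) (huf : u ∈ (f : Sym2 V)) (hef : e ≠ f) :
    x e + x f ≤ incidentSum G u x := by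
  simpa [sum_pair hef] using sum_le_incidentSum hx (s := {e, f}) (by simp [hue, huf])

theorem matchingPolytope_subset_cube [Fintype V] :
    matchingPolytope G ⊆ Set.univ.pi fun _ => Set.Icc 0 1 := by
  intro x hx e _
  have := sum_le_incidentSum hx.1 (s := {e}) (by simpa using (e : Sym2 V).out_fst_mem)
  exact ⟨hx.1 e, by simpa using this.trans (hx.2 _)⟩

theorem edgeIndicator_mem_matchingPolytope [Fintype V] {M : Set (Sym2 V)}
    (hM : IsMatchingSet G M) : edgeIndicator G M ∈ matchingPolytope G := by
  classical
  refine ⟨fun e => Set.indicator_nonneg (fun _ _ => zero_le_one) e, fun u => ?_⟩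
  have hcard : #{e : G.edgeSet | u ∈ (e : Sym2 V) ∧ (e : Sym2 V) ∈ M} ≤ 1 :=
    card_le_one.2 fun e he f hf => by
      simp only [mem_filter, mem_univ, true_and] at he hf
      by_contra hef
      exact hM.2 _ he.2 _ hf.2 (Subtype.coe_ne_coe.2 hef) u he.1 hf.1
  calc (∑ e : G.edgeSet, if u ∈ (e : Sym2 V) then edgeIndicator G M e else 0)
      = #{e : G.edgeSet | u ∈ (e : Sym2 V) ∧ (e : Sym2 V) ∈ M} := by
        rw [card_filter, Nat.cast_sum]
        refine sum_congr rfl fun e _ => ?_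
        by_cases h₁ : u ∈ (e : Sym2 V) <;> by_cases h₂ : (e : Sym2 V) ∈ M <;>
          simp [edgeIndicator, h₁, h₂]
    _ ≤ 1 := by exact_mod_cast hcard

theorem exists_isMatchingSet_eq_edgeIndicator [Fintype V] {x : G.edgeSet → ℝ}
    (hx : x ∈ matchingPolytope G) (h01 : ∀ e, x e = 0 ∨ x e = 1) :
    ∃ M, IsMatchingSet G M ∧ x = edgeIndicator G M := by
  refine ⟨Subtype.val '' {e | x e = 1}, ⟨by simp, ?_⟩, ?_⟩
  · rintro _ ⟨e, he : x e = 1, rfl⟩ _ ⟨f, hf : x f = 1, rfl⟩ hef u hue huf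
    have := (add_le_incidentSum hx.1 hue huf (ne_of_apply_ne _ hef)).trans (hx.2 u)
    linarith
  · funext e
    rcases h01 e with h | h <;> simp [edgeIndicator, h]

theorem exists_fractional_ne_of_tight [Fintype V] {x : G.edgeSet → ℝ}
    (hx : x ∈ matchingPolytope G) {u : V} (hu : incidentSum G u x = 1) {e : G.edgeSet}
    (he : 0 < x e ∧ x e < 1) (hue : u ∈ (e : Sym2 V)) :
    ∃ f ≠ e, u ∈ (f : Sym2 V) ∧ 0 < x f ∧ x f < 1 := by
  by_contra! h
  by_cases hpos : ∃ f ≠ e, u ∈ (f : Sym2 V) ∧ 0 < x f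
  · obtain ⟨f, hfe, huf, hf⟩ := hpos
    have := add_le_incidentSum hx.1 hue huf hfe.symm
    linarith [h f hfe huf hf]
  · push Not at hpos
    have : incidentSum G u x = x e := by
      refine (sum_eq_single e (fun f _ hfe => ?_) (by simp)).trans (if_pos hue)
      split_ifs with huf
      · exact le_antisymm (hpos f hfe huf) (hx.1 f)
      · rfl
    linarith

theorem exists_ne_zero_incidentSum_eq_zero (hG : G.Colorable 2) {F : Finset G.edgeSet}
    (hF : F.Nonempty) {T : Finset V} (hT : ∀ u ∈ T, 2 ≤ #{e ∈ F | u ∈ e.1}) :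
    ∃ d : G.edgeSet → ℝ, d ≠ 0 ∧ (∀ e ∉ F, d e = 0) ∧ ∀ u ∈ T, incidentSum G u d = 0 := by
  obtain ⟨v, hv, hAv⟩ := (exists_mulVec_eq_zero_iff_rank_lt _).2 <|
    (Fintype.card_coe F).symm ▸ rank_incidenceSubmatrix_lt hG hF hT
  let d : G.edgeSet → ℝ := fun e => if h : e ∈ F then v ⟨e, h⟩ else 0
  have hd : ∀ u : T, incidentSum G u d = (incidenceSubmatrix T F *ᵥ v) u := by
    intro u
    simp only [incidentSum, LinearMap.coe_mk, AddHom.coe_mk]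
    rw [← sum_subset (subset_univ F) (fun e _ he => by simp [d, he]), ← sum_coe_sort F]
    simp [d, incidenceSubmatrix, mulVec, dotProduct, ite_mul]
  refine ⟨d, fun h => hv (funext fun e => ?_), fun e he => dif_neg he, fun u hu => ?_⟩
  · simpa [d] using congrFun h e
  · simpa [hAv] using hd ⟨u, hu⟩

theorem eq_zero_or_eq_one_of_mem_extremePoints [Fintype V] (hG : G.Colorable 2)
    {x : G.edgeSet → ℝ} (hx : x ∈ Set.extremePoints ℝ (matchingPolytope G)) (e : G.edgeSet) :
    x e = 0 ∨ x e = 1 := by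
  by_contra! h
  have hP := hx.1
  let F : Finset G.edgeSet := {f | 0 < x f ∧ x f < 1}
  have heF : e ∈ F := by
    obtain ⟨h0, h1⟩ := matchingPolytope_subset_cube hP e trivial
    simpa [F] using ⟨h0.lt_of_ne' h.1, h1.lt_of_ne h.2⟩
  let T : Finset V := {u | incidentSum G u x = 1 ∧ ∃ f ∈ F, u ∈ f.1}
  have hT : ∀ u ∈ T, 2 ≤ #{f ∈ F | u ∈ f.1} := by
    intro u hu
    simp only [T, mem_filter, mem_univ, true_and] at hu
    obtain ⟨hu, f, hf, huf⟩ := hu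
    obtain ⟨g, hgf, hug, hg⟩ := exists_fractional_ne_of_tight hP hu (by simpa [F] using hf) huf
    exact one_lt_card.2 ⟨f, by simp [hf, huf], g, by simp [F, hg, hug], hgf.symm⟩
  obtain ⟨d, hd0, hdF, hdT⟩ := exists_ne_zero_incidentSum_eq_zero hG ⟨e, heF⟩ hT
  rw [matchingPolytope_eq_polyhedron] at hx
  refine notMem_extremePoints_polyhedron _ _ hd0 ?_ hx
  rintro (f | u) htight
  · have hf : f ∉ F := by simp_all [F]
    simp [hdF f hf]
  · by_cases hu : ∃ f ∈ F, u ∈ f.1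
    · exact hdT u (by simp_all [T])
    · push Not at hu
      refine sum_eq_zero fun f _ => ?_
      split_ifs with huf
      · exact hdF f fun hf => hu f hf huf
      · rfl

end MatchingPolytope

theorem matchingPolytope_extremePoints
    {V : Type} [Fintype V] [DecidableEq V] (G : SimpleGraph V) [Fintype G.edgeSet]
    (hbip : G.Colorable 2) :
    Set.extremePoints ℝ (matchingPolytope G) =
      {x | ∃ M : Set (Sym2 V), IsMatchingSet G M ∧ x = edgeIndicator G M} := by
  ext x
  refine ⟨fun hx => exists_isMatchingSet_eq_edgeIndicator hx.1
    (eq_zero_or_eq_one_of_mem_extremePoints hbip hx), ?_⟩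
  rintro ⟨M, hM, rfl⟩
  exact mem_extremePoints_of_subset_cube matchingPolytope_subset_cube
    (edgeIndicator_mem_matchingPolytope hM) (edgeIndicator_eq_zero_or_eq_one G M)
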